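/- arXiv:2209.07970 — 2 statements merged into one kernel-verified Lean document; each statement's English description precedes it below -/
import Mathlib

section
/- Let P be a finite poset, W an invertible P×P real matrix, T_q = W·D_q·W^{-1} with D_q(y,y) = χ[y ≤ q], and for h ∈ ℝ^P define the filter H = ∑_{q∈P} h(q)·T_q. Then for any signal s ∈ ℝ^P, the Fourier transform of H·s equals the pointwise product of the frequency response and the Fourier transform of s: (W^{-1}·H·s)(y) = (∑_{q ≥ y} h(q)) · (W^{-1}·s)(y) for all y ∈ P. -/
open Matrix

open Finset

/-- Convolution theorem: filtering is pointwise multiplication in the Fourier domain. -/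
theorem convolution_theorem
    {P : Type*} [Fintype P] [PartialOrder P] [DecidableEq P]
    [DecidableRel ((· ≤ ·) : P → P → Prop)]
    (W : Matrix P P ℝ) (hW : IsUnit W)
    (T : P → Matrix P P ℝ)
    (hT : ∀ q : P, T q =
      W * Matrix.diagonal (fun y => if y ≤ q then (1 : ℝ) else 0) * W⁻¹)
    (h : P → ℝ) (H : Matrix P P ℝ) (hH : H = ∑ q, h q • T q)
    (s : P → ℝ) :
    ∀ y : P, (W⁻¹ *ᵥ (H *ᵥ s)) y =
      (∑ q ∈ univ.filter (fun q => y ≤ q), h q) * (W⁻¹ *ᵥ s) y := by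
  intro y
  have hWinv : W⁻¹ * W = 1 := nonsing_inv_mul W (W.isUnit_iff_isUnit_det.mp hW)
  have key : W⁻¹ * H =
      ∑ q, h q • (Matrix.diagonal (fun z => if z ≤ q then (1 : ℝ) else 0) * W⁻¹) := by
    rw [hH, Matrix.mul_sum]
    refine Finset.sum_congr rfl fun q _ => ?_
    rw [hT q, Matrix.mul_smul]
    congr 1
    rw [← Matrix.mul_assoc, ← Matrix.mul_assoc, hWinv, Matrix.one_mul]
  rw [Matrix.mulVec_mulVec, key]
  have expand : ((∑ q : P, h q • ((Matrix.diagonal fun z => if z ≤ q then (1:ℝ) else 0) * W⁻¹)) *ᵥ s) y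
      = ∑ q : P, h q * ((if y ≤ q then (1:ℝ) else 0) * (W⁻¹ *ᵥ s) y) := by
    simp only [Matrix.mulVec, dotProduct, Matrix.sum_apply, Pi.smul_apply,
      Matrix.smul_apply, Matrix.mul_apply, Matrix.diagonal_apply, smul_eq_mul,
      ite_mul, zero_mul, Finset.sum_ite_eq, Finset.mem_univ, if_true,
      Finset.sum_mul, Finset.mul_sum, mul_ite, mul_zero]
    rw [Finset.sum_comm]
    refine Finset.sum_congr rfl fun q _ => ?_
    by_cases hq : y ≤ q <;> simp [hq, Finset.mul_sum, mul_assoc]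
  rw [expand, Finset.sum_filter, Finset.sum_mul]
  refine Finset.sum_congr rfl fun q _ => ?_
  by_cases hq : y ≤ q <;> simp [hq]
end

section
/- Let P be a finite poset in which every pair x, q ∈ P has a greatest lower bound x ∧ q (P is a meet-semilattice). Let W be the P×P 0/1 matrix W(x,y) = χ[y ≤ x] and T_q = W·D_q·W^{-1} with D_q(y,y) = χ[y ≤ q]. Then the shift acts as (T_q·s)(x) = s(x ∧ q) for every signal s ∈ ℝ^P and all x, q ∈ P. -/
open Matrix

/-- On a finite meet-semilattice with Boolean zeta matrix, the shift acts by
    `(T_q s)(x) = s(x ⊓ q)`. -/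
theorem shift_on_meet_semilattice
    {P : Type*} [Fintype P] [SemilatticeInf P] [DecidableEq P]
    [DecidableRel ((· ≤ ·) : P → P → Prop)]
    (W : Matrix P P ℝ)
    (hW : ∀ x y : P, W x y = if y ≤ x then 1 else 0)
    (T : P → Matrix P P ℝ)
    (hT : ∀ q : P, T q =
      W * Matrix.diagonal (fun y => if y ≤ q then (1 : ℝ) else 0) * W⁻¹) :
    ∀ q : P, ∀ s : P → ℝ, ∀ x : P, (T q *ᵥ s) x = s (x ⊓ q) := by
  haveI : DecidableRel ((· < ·) : P → P → Prop) :=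
    fun a b => decidable_of_iff ((a ≤ b) ∧ ¬ b ≤ a) lt_iff_le_not_ge.symm
  -- W is injective as a linear map, hence invertible
  have hinj : Function.Injective (W.mulVec) := by
    intro u v huv
    have key : ∀ w : P → ℝ, W *ᵥ w = 0 → w = 0 := by
      intro w hw
      funext x
      induction x using WellFoundedLT.induction with
      | _ x ih =>
        have hx : (W *ᵥ w) x = 0 := by rw [hw]; rfl
        have : ∑ y, W x y * w y = 0 := hx
        have hsum : ∑ y ∈ Finset.univ.filter (fun y => y ≤ x), w y = 0 := by
          rw [← this, Finset.sum_filter]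
          refine Finset.sum_congr rfl fun y _ => ?_
          rw [hW]
          by_cases h : y ≤ x <;> simp [h]
        simp only [Pi.zero_apply]
        have hsplit : (Finset.univ.filter (fun y => y ≤ x)) =
            insert x (Finset.univ.filter (fun y => y < x)) := by
          ext y
          simp [Finset.mem_insert, le_iff_lt_or_eq, or_comm]
        rw [hsplit, Finset.sum_insert (by simp)] at hsum
        have : ∑ y ∈ Finset.univ.filter (fun y => y < x), w y = 0 := by
          refine Finset.sum_eq_zero fun y hy => ?_
          simpa using ih y (Finset.mem_filter.mp hy).2
        rw [this, add_zero] at hsum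
        exact hsum
    have := key (u - v) (by rw [mulVec_sub, huv, sub_self])
    exact sub_eq_zero.mp this
  have hunit : IsUnit W := Matrix.mulVec_injective_iff_isUnit.mp hinj
  have hdet : IsUnit W.det := (Matrix.isUnit_iff_isUnit_det W).mp hunit
  intro q s x
  -- The key identity: W * D_q = M_q * W where M_q x y = χ[y = x ⊓ q]
  set M : Matrix P P ℝ := fun a b => if b = a ⊓ q then 1 else 0 with hM
  have hkey : W * Matrix.diagonal (fun y => if y ≤ q then (1 : ℝ) else 0) = M * W := by
    ext a b
    rw [Matrix.mul_apply, Matrix.mul_apply]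
    rw [Finset.sum_eq_single b (fun c _ hc => by
        simp [Matrix.diagonal_apply_ne _ hc]) (by simp)]
    rw [Finset.sum_eq_single (a ⊓ q) (fun c _ hc => by simp [hM, hc]) (by simp)]
    simp only [hM, Matrix.diagonal_apply_eq, hW, if_pos rfl, one_mul]
    by_cases h1 : b ≤ a <;> by_cases h2 : b ≤ q <;>
      simp [h1, h2, le_inf_iff, *]
  have hTq : T q = M := by
    rw [hT q, hkey, Matrix.mul_assoc, Matrix.mul_nonsing_inv W hdet, Matrix.mul_one]
  rw [hTq]
  rw [Matrix.mulVec, dotProduct]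
  rw [Finset.sum_eq_single (x ⊓ q) (fun c _ hc => by simp [hM, hc]) (by simp)]
  simp [hM]
end
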